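/- (Lemma 5.7: lower bound for the boundary L^q norm of û_ε) Let N ≥ 3, 2 ≤ q < 2_*, and θ_N = N − 1 − (N−2)q/2. Let û_ε be as defined in the context, with a fixed admissible cutoff φ. Then there exist l > 0 and ε_0 > 0 such that for all 0 < ε < ε_0: if 2 < q < 2_*, then ∫_{ℝ^{N−1}} e^{|x′|²/4} û_ε(x′,0)^q dx′ ≥ l ε^{θ_N}; if q = 2 and N ≥ 4, then ∫_{ℝ^{N−1}} e^{|x′|²/4} û_ε(x′,0)² dx′ ≥ l ε; if q = 2 and N = 3, then ∫_{ℝ²} e^{|x′|²/4} û_ε(x′,0)² dx′ ≥ l ε|ln ε|. -/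

import Mathlib

open MeasureTheory Real Filter Topology Asymptotics

noncomputable section

/-- The index of the last coordinate of `ℝ^N`. -/
def lastIdx (N : ℕ) (hN : 0 < N) : Fin N := ⟨N - 1, by omega⟩

/-- The open upper half-space `ℝ^N_+ = {x : x_N > 0}`. -/
def upperHalf (N : ℕ) (hN : 0 < N) : Set (EuclideanSpace ℝ (Fin N)) :=
  {x | 0 < x (lastIdx N hN)}

/-- The closed upper half-space `{x : x_N ≥ 0}`. -/
def closedHalf (N : ℕ) (hN : 0 < N) : Set (EuclideanSpace ℝ (Fin N)) :=
  {x | 0 ≤ x (lastIdx N hN)}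

/-- The embedding `ℝ^{N-1} → ℝ^N`, `x' ↦ (x', 0)`. -/
def pad (N : ℕ) (x' : EuclideanSpace ℝ (Fin (N - 1))) : EuclideanSpace ℝ (Fin N) :=
  (EuclideanSpace.equiv (Fin N) ℝ).symm fun i =>
    if h : (i : ℕ) < N - 1 then x' ⟨i, h⟩ else 0

/-- The partial derivative `∂u/∂x_i`. -/
def pderiv' {N : ℕ} (u : EuclideanSpace ℝ (Fin N) → ℝ) (i : Fin N)
    (x : EuclideanSpace ℝ (Fin N)) : ℝ :=
  fderiv ℝ u x (EuclideanSpace.single i 1)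

/-- The Laplacian `Δu = ∑_i ∂²u/∂x_i²`. -/
def lap {N : ℕ} (u : EuclideanSpace ℝ (Fin N) → ℝ) (x : EuclideanSpace ℝ (Fin N)) : ℝ :=
  ∑ i, pderiv' (pderiv' u i) i x

/-- The radial derivative `x · ∇u`. -/
def radDeriv {N : ℕ} (u : EuclideanSpace ℝ (Fin N) → ℝ) (x : EuclideanSpace ℝ (Fin N)) : ℝ :=
  ∑ i, x i * pderiv' u i x

/-- The exponential weight `K(x) = e^{|x|²/4}`. -/
def Kw {N : ℕ} (x : EuclideanSpace ℝ (Fin N)) : ℝ := Real.exp (‖x‖ ^ 2 / 4)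

/-- `|x'|²`, the squared norm of the first `N - 1` coordinates of `x`. -/
def normSq' {N : ℕ} (x : EuclideanSpace ℝ (Fin N)) : ℝ :=
  ∑ i : Fin N, if (i : ℕ) < N - 1 then (x i) ^ 2 else 0

/-- `k_N = (√(N(N-2)))^{(N-2)/2}`. -/
def kN (N : ℕ) : ℝ := Real.sqrt ((N : ℝ) * ((N : ℝ) - 2)) ^ (((N : ℝ) - 2) / 2)

/-- `x_N⁰ = √(N/(N-2))`. -/
def xN0 (N : ℕ) : ℝ := Real.sqrt ((N : ℝ) / ((N : ℝ) - 2))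

/-- The critical Sobolev exponent `2^* = 2N/(N-2)`. -/
def pstar (N : ℕ) : ℝ := 2 * (N : ℝ) / ((N : ℝ) - 2)

/-- The critical trace exponent `2_* = 2(N-1)/(N-2)`. -/
def pstarb (N : ℕ) : ℝ := 2 * ((N : ℝ) - 1) / ((N : ℝ) - 2)

/-- The instanton `U_ε` (denoted `φ_{ε,1}` in the paper). -/
def Ueps (N : ℕ) (hN : 0 < N) (ε : ℝ) (x : EuclideanSpace ℝ (Fin N)) : ℝ :=
  kN N * (ε / (ε ^ 2 + normSq' x + (x (lastIdx N hN) + ε * xN0 N) ^ 2)) ^ (((N : ℝ) - 2) / 2)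

/-- The instanton `Û_ε` for the trace inequality. -/
def Uhat (N : ℕ) (hN : 0 < N) (ε : ℝ) (x : EuclideanSpace ℝ (Fin N)) : ℝ :=
  (ε / (normSq' x + (x (lastIdx N hN) + ε) ^ 2)) ^ (((N : ℝ) - 2) / 2)

/-- A cutoff `φ` is admissible if it is smooth, `[0,1]`-valued, `≡ 1` on `B₁(0) ∩ {x_N ≥ 0}`
and `≡ 0` on `{x_N ≥ 0} \ B₂(0)`. -/
structure AdmissibleCutoff (N : ℕ) (hN : 0 < N) (φ : EuclideanSpace ℝ (Fin N) → ℝ) : Prop where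
  smooth : ContDiff ℝ (⊤ : ℕ∞) φ
  mem01 : ∀ x, φ x ∈ Set.Icc (0 : ℝ) 1
  eq_one : ∀ x ∈ Metric.ball (0 : EuclideanSpace ℝ (Fin N)) 1 ∩ closedHalf N hN, φ x = 1
  eq_zero : ∀ x ∈ closedHalf N hN \ Metric.ball (0 : EuclideanSpace ℝ (Fin N)) 2, φ x = 0

/-- The test function `u_ε = K^{-1/2} φ U_ε`. -/
def ueps (N : ℕ) (hN : 0 < N) (φ : EuclideanSpace ℝ (Fin N) → ℝ) (ε : ℝ)
    (x : EuclideanSpace ℝ (Fin N)) : ℝ :=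
  Real.exp (-‖x‖ ^ 2 / 8) * φ x * Ueps N hN ε x

/-- The test function `û_ε = K^{-1/2} φ Û_ε`. -/
def uhat (N : ℕ) (hN : 0 < N) (φ : EuclideanSpace ℝ (Fin N) → ℝ) (ε : ℝ)
    (x : EuclideanSpace ℝ (Fin N)) : ℝ :=
  Real.exp (-‖x‖ ^ 2 / 8) * φ x * Uhat N hN ε x

/-- The area of the unit sphere in `ℝ^n` (equal to `n` times the volume of the unit ball). -/
def sphereArea (n : ℕ) : ℝ :=
  n * (volume (Metric.ball (0 : EuclideanSpace ℝ (Fin n)) 1)).toReal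

/-- The Beta function `B(a,b) = Γ(a)Γ(b)/Γ(a+b)`. -/
def betaFn (a b : ℝ) : ℝ := Real.Gamma a * Real.Gamma b / Real.Gamma (a + b)

/-- The constant `α_N`. -/
def alphaN (N : ℕ) (hN : 0 < N) : ℝ :=
  ((N : ℝ) - 2) * kN N ^ 2 / 2 *
    ∫ y in upperHalf N hN,
      (normSq' y + y (lastIdx N hN) * (y (lastIdx N hN) + xN0 N)) /
        (1 + normSq' y + (y (lastIdx N hN) + xN0 N) ^ 2) ^ (N - 1)

/-- The constant `β_N`. -/
def betaN (N : ℕ) (hN : 0 < N) : ℝ :=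
  kN N ^ pstar N / (2 * ((N : ℝ) - 2)) *
    ∫ y in upperHalf N hN,
      ‖y‖ ^ 2 / (1 + normSq' y + (y (lastIdx N hN) + xN0 N) ^ 2) ^ N

/-- The constant `γ_N`. -/
def gammaN (N : ℕ) : ℝ :=
  kN N ^ pstarb N / (4 * ((N : ℝ) - 2)) *
    ∫ y' : EuclideanSpace ℝ (Fin (N - 1)),
      ‖y'‖ ^ 2 / (1 + ‖y'‖ ^ 2 + xN0 N ^ 2) ^ (N - 1)

/-- The constant `d_N`. -/
def dN (N : ℕ) (hN : 0 < N) : ℝ :=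
  kN N ^ 2 *
    ∫ y in upperHalf N hN,
      ((1 + normSq' y + (y (lastIdx N hN) + xN0 N) ^ 2) ^ (N - 2))⁻¹

/-- The threshold `λ_N^* = α_N/d_N + (2/2^*)·β_N/d_N + (2/2_*)·γ_N/d_N`. -/
def lamStar (N : ℕ) (hN : 0 < N) : ℝ :=
  alphaN N hN / dN N hN + (2 / pstar N) * betaN N hN / dN N hN
    + (2 / pstarb N) * gammaN N / dN N hN

/-- The threshold `λ̄` of Theorem 1.2 (1). -/
def lamBar (N : ℕ) (hN : 0 < N) : ℝ :=
  if N = 3 then (3 + Real.sqrt 5) / 4 else if N = 4 then 1 else lamStar N hN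

/-- The threshold `λ̂` of Theorem 1.3 (1). -/
def lamHat (N : ℕ) : ℝ :=
  if N = 3 then (3 + Real.sqrt 5) / 4 else (N : ℝ) / 4 + ((N : ℝ) - 4) / 8

/-- The shifted bubble `φ_{ε,τ}`. -/
def phiB (N : ℕ) (hN : 0 < N) (ε τ : ℝ) (x : EuclideanSpace ℝ (Fin N)) : ℝ :=
  kN N * (ε / (ε ^ 2 + normSq' x + (x (lastIdx N hN) + ε * τ * xN0 N) ^ 2))
    ^ (((N : ℝ) - 2) / 2)

/-- The function `ψ(x) = e^{-|x|²/(8√5)}` (dimension 3). -/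
def psi3 (x : EuclideanSpace ℝ (Fin 3)) : ℝ := Real.exp (-‖x‖ ^ 2 / (8 * Real.sqrt 5))

/-- The test function `v_ε = K^{-1/2} ψ U_ε` (dimension 3). -/
def veps (ε : ℝ) (x : EuclideanSpace ℝ (Fin 3)) : ℝ :=
  Real.exp (-‖x‖ ^ 2 / 8) * psi3 x * Ueps 3 (by norm_num) ε x

/-- `K₁ = ∫_{ℝ³₊} |∇U_ε|²` (independent of `ε`). -/
def K1const : ℝ :=
  ∫ x in upperHalf 3 (by norm_num), ‖gradient (Ueps 3 (by norm_num) 1) x‖ ^ 2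

/-- `K₂ = ∫_{ℝ³₊} U_ε⁶` (independent of `ε`). -/
def K2const : ℝ := ∫ x in upperHalf 3 (by norm_num), Ueps 3 (by norm_num) 1 x ^ 6

/-- `K₃ = ∫_{ℝ²} U_ε(x',0)⁴ dx'` (independent of `ε`). -/
def K3const : ℝ :=
  ∫ x' : EuclideanSpace ℝ (Fin 2), Ueps 3 (by norm_num) 1 (pad 3 x') ^ 4

/-- `A_N = ∫_{ℝ^N_+} |∇Û_ε|²` (independent of `ε`). -/
def Ahat (N : ℕ) (hN : 0 < N) : ℝ :=
  ∫ x in upperHalf N hN, ‖gradient (Uhat N hN 1) x‖ ^ 2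

/-- The constant `α̂_N`. -/
def alphaHat (N : ℕ) : ℝ :=
  sphereArea (N - 1) * ((N : ℝ) - 2) / (4 * ((N : ℝ) - 4)) *
    (betaFn (((N : ℝ) + 1) / 2) (((N : ℝ) - 3) / 2)
      + 1 / ((N : ℝ) - 3) * betaFn (((N : ℝ) - 1) / 2) (((N : ℝ) - 1) / 2))

/-- The constant `γ̂_N`. -/
def gammaHat (N : ℕ) : ℝ :=
  sphereArea (N - 1) / (8 * ((N : ℝ) - 2)) * betaFn (((N : ℝ) + 1) / 2) (((N : ℝ) - 3) / 2)

/-- The constant `d̂_N`. -/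
def dHat (N : ℕ) : ℝ :=
  sphereArea (N - 1) / (2 * ((N : ℝ) - 4)) * betaFn (((N : ℝ) - 1) / 2) (((N : ℝ) - 3) / 2)

/-- `T_N = ∫_{ℝ^{N-1}} Û_ε(x',0)^{2_*} dx'` (independent of `ε`;
`T_N = B_N^{2_*/2}` in the paper's notation). -/
def Tconst (N : ℕ) (hN : 0 < N) : ℝ :=
  ∫ x' : EuclideanSpace ℝ (Fin (N - 1)), Uhat N hN 1 (pad N x') ^ pstarb N


/-!
On the boundary `û_ε(x', 0) = e^{-|x'|²/8} φ(x', 0) (ε / (|x'|² + ε²))^{(N-2)/2}`, and for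
`|x'| < 1` the cutoff equals `1` while the weights `e^{|x'|²/4} e^{-q|x'|²/8}` stay above
`e^{-q/8}`. On the ball `|x'| < ε` the bubble is at least `(2ε)^{-(N-2)/2}`, and the ball has
volume `~ ε^{N-1}`: this gives `c ε^{θ_N}`, which is `c ε` when `q = 2`. For `N = 3`, `q = 2`
the integrand is at least `c ε / |x'|²` on the annulus `ε ≤ |x'| ≤ 1/2`, whose integral in polar
coordinates on `ℝ²` is `c ε log (1 / (2ε)) ≥ c ε |log ε| / 2` once `ε ≤ 1/4`.
-/

lemma pad_apply (N : ℕ) (x' : EuclideanSpace ℝ (Fin (N - 1))) (i : Fin N) :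
    pad N x' i = if h : (i : ℕ) < N - 1 then x' ⟨i, h⟩ else 0 := rfl

lemma pad_lastIdx (N : ℕ) (hN : 0 < N) (x' : EuclideanSpace ℝ (Fin (N - 1))) :
    pad N x' (lastIdx N hN) = 0 := by
  simp [pad_apply, lastIdx]

lemma sum_comp_pad (N : ℕ) (g : ℝ → ℝ) (hg : g 0 = 0)
    (x' : EuclideanSpace ℝ (Fin (N - 1))) :
    ∑ i, g (pad N x' i) = ∑ j, g (x' j) := by
  refine (Fintype.sum_of_injective (Fin.castLE (Nat.sub_le N 1)) (Fin.castLE_injective _) _ _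
    (fun i hi => ?_) (fun j => by simp [pad_apply])).symm
  have : ¬ (i : ℕ) < N - 1 := fun h => hi ⟨⟨i, h⟩, rfl⟩
  simp [pad_apply, this, hg]

lemma norm_pad (N : ℕ) (x' : EuclideanSpace ℝ (Fin (N - 1))) : ‖pad N x'‖ = ‖x'‖ := by
  simp only [EuclideanSpace.norm_eq, Real.norm_eq_abs, sq_abs]
  rw [sum_comp_pad N (· ^ 2) (zero_pow two_ne_zero)]

lemma normSq'_pad (N : ℕ) (x' : EuclideanSpace ℝ (Fin (N - 1))) :
    normSq' (pad N x') = ‖x'‖ ^ 2 := by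
  rw [normSq', ← norm_pad N, EuclideanSpace.norm_eq, Real.sq_sqrt (by positivity)]
  refine Finset.sum_congr rfl fun i _ => ?_
  split_ifs with h
  · simp
  · simp [pad_apply, h]

lemma continuous_pad (N : ℕ) : Continuous (pad N) := by
  refine (EuclideanSpace.equiv (Fin N) ℝ).symm.continuous.comp (continuous_pi fun i => ?_)
  by_cases h : (i : ℕ) < N - 1
  · simp only [dif_pos h]
    fun_prop
  · simp only [dif_neg h]
    fun_prop

lemma uhat_pad (N : ℕ) (hN : 0 < N) (φ : EuclideanSpace ℝ (Fin N) → ℝ) (ε : ℝ)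
    (x' : EuclideanSpace ℝ (Fin (N - 1))) :
    uhat N hN φ ε (pad N x') =
      exp (-‖x'‖ ^ 2 / 8) * φ (pad N x') * (ε / (‖x'‖ ^ 2 + ε ^ 2)) ^ (((N : ℝ) - 2) / 2) := by
  rw [uhat, Uhat, normSq'_pad, pad_lastIdx, norm_pad, zero_add]

section BoundaryIntegrand

variable {N : ℕ} {hN : 0 < N} {φ : EuclideanSpace ℝ (Fin N) → ℝ} {ε q : ℝ}

lemma uhat_pad_nonneg (hφ : AdmissibleCutoff N hN φ) (hε : 0 < ε)
    (x' : EuclideanSpace ℝ (Fin (N - 1))) : 0 ≤ uhat N hN φ ε (pad N x') := by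
  have := (hφ.mem01 (pad N x')).1
  rw [uhat_pad]
  positivity

lemma integrable_exp_mul_uhat_pad_rpow (hφ : AdmissibleCutoff N hN φ) (hε : 0 < ε)
    (hq : 0 < q) :
    Integrable fun x' : EuclideanSpace ℝ (Fin (N - 1)) =>
      exp (‖x'‖ ^ 2 / 4) * uhat N hN φ ε (pad N x') ^ q := by
  have hφc : Continuous fun x' => φ (pad N x') := hφ.smooth.continuous.comp (continuous_pad N)
  have hu : Continuous fun x' => uhat N hN φ ε (pad N x') := by
    simp only [uhat_pad]
    refine ((by fun_prop : Continuous fun x' : EuclideanSpace ℝ (Fin (N - 1)) =>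
      exp (-‖x'‖ ^ 2 / 8)).mul hφc).mul (Continuous.rpow_const ?_ fun _ => Or.inl (by positivity))
    fun_prop (disch := intros; positivity)
  refine Continuous.integrable_of_hasCompactSupport
    (by fun_prop (disch := exact hq.le)) ?_
  refine HasCompactSupport.intro (isCompact_closedBall 0 2) fun x' hx' => ?_
  have hx' : pad N x' ∈ closedHalf N hN \ Metric.ball 0 2 := by
    simp_all [closedHalf, pad_lastIdx, norm_pad, le_of_lt]
  rw [uhat_pad, hφ.eq_zero _ hx', mul_zero, zero_mul, zero_rpow hq.ne', mul_zero]

lemma exp_mul_rpow_le_exp_mul_uhat_pad_rpow (hφ : AdmissibleCutoff N hN φ) (hε : 0 < ε)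
    (hq : 0 ≤ q) {x' : EuclideanSpace ℝ (Fin (N - 1))} (hx' : ‖x'‖ < 1) :
    exp (-q / 8) * (ε / (‖x'‖ ^ 2 + ε ^ 2)) ^ (((N : ℝ) - 2) / 2 * q) ≤
      exp (‖x'‖ ^ 2 / 4) * uhat N hN φ ε (pad N x') ^ q := by
  have hφ1 : φ (pad N x') = 1 :=
    hφ.eq_one _ ⟨by simpa [norm_pad] using hx', (pad_lastIdx N hN x').ge⟩
  have hx'sq : ‖x'‖ ^ 2 ≤ 1 := by nlinarith [norm_nonneg x']
  have hexp : exp (-q / 8) ≤ exp (‖x'‖ ^ 2 / 4) * exp (-‖x'‖ ^ 2 / 8 * q) := by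
    rw [← exp_add]
    exact exp_le_exp.2 (by nlinarith)
  rw [uhat_pad, hφ1, mul_one, mul_rpow (exp_nonneg _) (by positivity), ← exp_mul,
    ← rpow_mul (by positivity), ← mul_assoc]
  gcongr

lemma const_mul_rpow_le_integral_uhat_pad (hN2 : 2 ≤ N) (hφ : AdmissibleCutoff N hN φ)
    (hε : 0 < ε) (hε1 : ε < 1) (hq : 0 < q) :
    exp (-q / 8) * 2 ^ (-(((N : ℝ) - 2) / 2 * q)) *
        volume.real (Metric.ball (0 : EuclideanSpace ℝ (Fin (N - 1))) 1) *
        ε ^ ((N : ℝ) - 1 - ((N : ℝ) - 2) * q / 2) ≤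
      ∫ x' : EuclideanSpace ℝ (Fin (N - 1)),
        exp (‖x'‖ ^ 2 / 4) * uhat N hN φ ε (pad N x') ^ q := by
  set m : ℝ := ((N : ℝ) - 2) / 2 * q
  have hm : 0 ≤ m := mul_nonneg (by linarith [(Nat.ofNat_le_cast.2 hN2 : (2 : ℝ) ≤ N)]) hq.le
  have hint := integrable_exp_mul_uhat_pad_rpow hφ hε hq
  have hball : ∀ x' ∈ Metric.ball (0 : EuclideanSpace ℝ (Fin (N - 1))) ε,
      exp (-q / 8) * (2 * ε)⁻¹ ^ m ≤ exp (‖x'‖ ^ 2 / 4) * uhat N hN φ ε (pad N x') ^ q := by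
    intro x' hx'
    rw [mem_ball_zero_iff] at hx'
    refine le_trans ?_ (exp_mul_rpow_le_exp_mul_uhat_pad_rpow hφ hε hq.le (hx'.trans hε1))
    gcongr
    rw [← one_div, div_le_div_iff₀ (by positivity) (by positivity)]
    nlinarith [norm_nonneg x']
  have hvol : volume.real (Metric.ball (0 : EuclideanSpace ℝ (Fin (N - 1))) ε) =
      ε ^ ((N : ℝ) - 1) * volume.real (Metric.ball (0 : EuclideanSpace ℝ (Fin (N - 1))) 1) := by
    rw [Measure.real, Measure.addHaar_ball_of_pos _ _ hε, ENNReal.toReal_mul,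
      ENNReal.toReal_ofReal (by positivity), finrank_euclideanSpace_fin, ← rpow_natCast,
      Nat.cast_sub (by omega), Nat.cast_one, Measure.real]
  calc _ = exp (-q / 8) * (2 * ε)⁻¹ ^ m * volume.real (Metric.ball 0 ε) := by
        rw [hvol, inv_rpow (by positivity), mul_rpow zero_le_two hε.le, rpow_neg zero_le_two,
          show (N : ℝ) - 1 - ((N : ℝ) - 2) * q / 2 = (N - 1) + -m by ring, rpow_add hε,
          rpow_neg hε.le]
        field_simp
    _ ≤ ∫ x' in Metric.ball 0 ε, exp (‖x'‖ ^ 2 / 4) * uhat N hN φ ε (pad N x') ^ q :=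
        setIntegral_ge_of_const_le_real measurableSet_ball measure_ball_lt_top.ne hball
          hint.integrableOn
    _ ≤ _ := setIntegral_le_integral hint (ae_of_all _ fun x' => by
        have := uhat_pad_nonneg hφ hε x'
        positivity)

end BoundaryIntegrand

lemma finrank_mul_integral_radial_le_integral {E : Type*} [NormedAddCommGroup E]
    [NormedSpace ℝ E] [MeasurableSpace E] [BorelSpace E] [FiniteDimensional ℝ E] [Nontrivial E]
    (μ : Measure E) [μ.IsAddHaarMeasure] {F : ℝ → ℝ} {G : E → ℝ} (hG : Integrable G μ)
    (hF : ∀ r, 0 ≤ F r) (hFG : ∀ x, F ‖x‖ ≤ G x) :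
    Module.finrank ℝ E * μ.real (Metric.ball 0 1) *
        ∫ r in Set.Ioi 0, r ^ (Module.finrank ℝ E - 1) * F r ≤ ∫ x, G x ∂μ := by
  have := integral_fun_norm_addHaar μ F
  simp only [nsmul_eq_mul, smul_eq_mul] at this
  rw [mul_assoc, ← this]
  exact integral_mono_of_nonneg (ae_of_all _ fun _ => hF _) hG (ae_of_all _ hFG)

lemma integral_Ioi_mul_indicator_div_sq {a b : ℝ} (c : ℝ) (ha : 0 < a) (hab : a ≤ b) :
    ∫ r in Set.Ioi 0, r * (Set.Icc a b).indicator (fun r => c / r ^ 2) r = c * log (b / a) := by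
  have hIcc : Set.Icc a b ⊆ Set.Ioi 0 := fun r hr => ha.trans_le hr.1
  simp_rw [← Set.indicator_mul_right _ (fun r : ℝ => r)]
  rw [setIntegral_indicator measurableSet_Icc, Set.inter_eq_right.2 hIcc,
    integral_Icc_eq_integral_Ioc, ← intervalIntegral.integral_of_le hab,
    ← integral_inv_of_pos ha (ha.trans_le hab), ← intervalIntegral.integral_const_mul]
  refine intervalIntegral.integral_congr fun r hr => ?_
  rw [Set.uIcc_of_le hab] at hr
  have : 0 < r := ha.trans_le hr.1
  field_simp

lemma half_abs_log_le_log_inv_two_div {ε : ℝ} (hε : 0 < ε) (hε4 : ε ≤ 1 / 4) :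
    |log ε| / 2 ≤ log (2⁻¹ / ε) := by
  have hlog4 : log 4 = 2 * log 2 := by
    rw [show (4 : ℝ) = 2 ^ 2 by norm_num, log_pow, Nat.cast_ofNat]
  have : log ε ≤ -log 4 := by
    rw [← log_inv]
    exact log_le_log hε (by linarith)
  rw [abs_of_neg (by linarith [log_pos (by norm_num : (1 : ℝ) < 4)]),
    log_div (by norm_num) hε.ne', log_inv]
  linarith

lemma const_mul_mul_abs_log_le_integral_uhat_pad {φ : EuclideanSpace ℝ (Fin 3) → ℝ}
    (hφ : AdmissibleCutoff 3 (by norm_num) φ) {ε : ℝ} (hε : 0 < ε) (hε4 : ε < 1 / 4) :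
    volume.real (Metric.ball (0 : EuclideanSpace ℝ (Fin (3 - 1))) 1) * exp (-1 / 4) / 2 * ε *
        |log ε| ≤
      ∫ x' : EuclideanSpace ℝ (Fin (3 - 1)),
        exp (‖x'‖ ^ 2 / 4) * uhat 3 (by norm_num) φ ε (pad 3 x') ^ (2 : ℝ) := by
  set c := exp (-1 / 4) * ε / 2 with hc
  have hFG : ∀ x' : EuclideanSpace ℝ (Fin (3 - 1)),
      (Set.Icc ε 2⁻¹).indicator (fun r => c / r ^ 2) ‖x'‖ ≤
        exp (‖x'‖ ^ 2 / 4) * uhat 3 (by norm_num) φ ε (pad 3 x') ^ (2 : ℝ) := by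
    intro x'
    by_cases hx' : ‖x'‖ ∈ Set.Icc ε 2⁻¹
    · rw [Set.indicator_of_mem hx']
      refine le_trans ?_ (exp_mul_rpow_le_exp_mul_uhat_pad_rpow hφ hε zero_le_two
        (hx'.2.trans_lt (by norm_num)))
      have hx0 : 0 < ‖x'‖ := hε.trans_le hx'.1
      rw [show ((3 : ℕ) - 2 : ℝ) / 2 * 2 = 1 by norm_num, rpow_one]
      calc c / ‖x'‖ ^ 2 = exp (-2 / 8) * (ε / (2 * ‖x'‖ ^ 2)) := by
            rw [show (-2 / 8 : ℝ) = -1 / 4 by norm_num, hc]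
            field_simp
        _ ≤ exp (-2 / 8) * (ε / (‖x'‖ ^ 2 + ε ^ 2)) := by
            gcongr
            nlinarith [hx'.1]
    · rw [Set.indicator_of_notMem hx']
      have := uhat_pad_nonneg hφ hε x'
      positivity
  have hradial := finrank_mul_integral_radial_le_integral volume
    (integrable_exp_mul_uhat_pad_rpow hφ hε zero_lt_two)
    (Set.indicator_nonneg fun r hr => by have := hε.trans_le hr.1; positivity) hFG
  simp only [finrank_euclideanSpace_fin, Nat.add_one_sub_one, pow_one, Nat.cast_ofNat] at hradial
  rw [integral_Ioi_mul_indicator_div_sq c hε (by linarith)] at hradial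
  have hlog := half_abs_log_le_log_inv_two_div hε hε4.le
  calc _ = 2 * volume.real (Metric.ball (0 : EuclideanSpace ℝ (Fin (3 - 1))) 1) *
          (c * (|log ε| / 2)) := by ring
    _ ≤ _ := by gcongr
    _ ≤ _ := hradial

/-- **Lemma 5.7: lower bound for the boundary `L^q` norm of `û_ε`.** -/
theorem boundary_Lq_lower_bound_uhat
    (N : ℕ) (hN : 3 ≤ N) (q : ℝ) (hq1 : 2 ≤ q)
    (φ : EuclideanSpace ℝ (Fin N) → ℝ) (hφ : AdmissibleCutoff N (by omega) φ) :
    ∃ l > (0 : ℝ), ∃ ε₀ > (0 : ℝ), ∀ ε : ℝ, 0 < ε → ε < ε₀ →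
      ((2 < q →
        l * ε ^ ((N : ℝ) - 1 - ((N : ℝ) - 2) * q / 2)
          ≤ ∫ x' : EuclideanSpace ℝ (Fin (N - 1)),
              Real.exp (‖x'‖ ^ 2 / 4) * uhat N (by omega) φ ε (pad N x') ^ q) ∧
      (q = 2 → 4 ≤ N →
        l * ε
          ≤ ∫ x' : EuclideanSpace ℝ (Fin (N - 1)),
              Real.exp (‖x'‖ ^ 2 / 4) * uhat N (by omega) φ ε (pad N x') ^ q) ∧
      (q = 2 → N = 3 →
        l * ε * |Real.log ε|
          ≤ ∫ x' : EuclideanSpace ℝ (Fin (N - 1)),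
              Real.exp (‖x'‖ ^ 2 / 4) * uhat N (by omega) φ ε (pad N x') ^ q)) := by
  have hvol_pos (n : ℕ) : 0 < volume.real (Metric.ball (0 : EuclideanSpace ℝ (Fin n)) 1) :=
    ENNReal.toReal_pos (Metric.measure_ball_pos volume 0 one_pos).ne' measure_ball_lt_top.ne
  set l₁ := exp (-q / 8) * 2 ^ (-(((N : ℝ) - 2) / 2 * q)) *
    volume.real (Metric.ball (0 : EuclideanSpace ℝ (Fin (N - 1))) 1)
  set l₃ := volume.real (Metric.ball (0 : EuclideanSpace ℝ (Fin (3 - 1))) 1) * exp (-1 / 4) / 2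
  have hl₁ : 0 < l₁ := by have := hvol_pos (N - 1); positivity
  have hl₃ : 0 < l₃ := by have := hvol_pos (3 - 1); positivity
  refine ⟨min l₁ l₃, lt_min hl₁ hl₃, 1 / 4, by norm_num, fun ε hε hε4 =>
    ⟨fun _ => ?_, fun hq2 _ => ?_, fun hq2 hN3 => ?_⟩⟩
  · refine le_trans ?_ (const_mul_rpow_le_integral_uhat_pad (by omega) hφ hε (by linarith)
      (by linarith))
    gcongr
    exact min_le_left _ _
  · subst hq2
    have h := const_mul_rpow_le_integral_uhat_pad (by omega) hφ hε (by linarith) two_pos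
    rw [show (N : ℝ) - 1 - ((N : ℝ) - 2) * 2 / 2 = 1 by ring, rpow_one] at h
    refine le_trans ?_ h
    gcongr
    exact min_le_left _ _
  · subst hq2 hN3
    refine le_trans ?_ (const_mul_mul_abs_log_le_integral_uhat_pad hφ hε hε4)
    gcongr
    exact min_le_right _ _
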